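/- arXiv:2309.15667 — 2 statements merged into one kernel-verified Lean document; each statement's English description precedes it below -/
import Mathlib

section
/- Let x₀, x₁, x₂, x₃ ∈ ℝ³ be affinely independent, and define the Nédélec edge basis function φ₂₃(x) = ((x₁ - x₀) × (x - x₀))/det(x₁ - x₀, x₂ - x₀, x₃ - x₂). Let E₂₃ be the segment from x₂ to x₃ with unit tangent t = (x₃ - x₂)/‖x₃ - x₂‖. Then ∫_{E₂₃} φ₂₃ · t ds = 1. -/
open Matrix MeasureTheory

/-- The scalar triple product `det(a,b,c) = (a × b) · c`. -/
noncomputable def det3 (a b c : Fin 3 → ℝ) : ℝ := crossProduct a b ⬝ᵥ c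

lemma det3_eq_det (a b c : Fin 3 → ℝ) : det3 a b c = Matrix.det ![a, b, c] := by
  rw [det3, dotProduct_comm, triple_product_permutation, triple_product_eq_det]

lemma det3_sub (a b c : Fin 3 → ℝ) : det3 a b (c - b) = det3 a b c := by
  have hmat : (![a, b, c - b] : Matrix (Fin 3) (Fin 3) ℝ) =
      Matrix.updateRow ![a, b, c] 2 (![a, b, c] 2 + (-1 : ℝ) • ![a, b, c] 1) := by
    funext i j
    fin_cases i <;>
      simp [Matrix.updateRow, Function.update, sub_eq_add_neg]
  rw [det3_eq_det, det3_eq_det, hmat]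
  exact Matrix.det_updateRow_add_smul_self _ (by decide) (-1 : ℝ)

theorem stmt7 (x₀ x₁ x₂ x₃ : Fin 3 → ℝ)
    (hind : AffineIndependent ℝ ![x₀, x₁, x₂, x₃])
    (φ : (Fin 3 → ℝ) → (Fin 3 → ℝ))
    (hφ : ∀ y, φ y =
      (det3 (x₁ - x₀) (x₂ - x₀) (x₃ - x₂))⁻¹ • crossProduct (x₁ - x₀) (y - x₀)) :
    ∫ t in (0:ℝ)..1, φ (x₂ + t • (x₃ - x₂)) ⬝ᵥ (x₃ - x₂) = 1 := by
  set c := det3 (x₁ - x₀) (x₂ - x₀) (x₃ - x₂) with hc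
  have hli : LinearIndependent ℝ ![x₁ - x₀, x₂ - x₀, x₃ - x₀] := by
    have h := (affineIndependent_iff_linearIndependent_vsub ℝ ![x₀, x₁, x₂, x₃] 0).mp hind
    have this := h.comp
      (fun j : Fin 3 => (⟨j.succ, Fin.succ_ne_zero j⟩ : {i : Fin 4 // i ≠ 0}))
      (fun i j hij => Fin.succ_injective _ (congrArg Subtype.val hij))
    convert this using 1
    funext j
    fin_cases j <;> simp [vsub_eq_sub]
    all_goals rfl
  have hdet : Matrix.det ![x₁ - x₀, x₂ - x₀, x₃ - x₀] ≠ 0 := by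
    have hu := (Matrix.linearIndependent_rows_iff_isUnit
      (A := (![x₁ - x₀, x₂ - x₀, x₃ - x₀] : Matrix (Fin 3) (Fin 3) ℝ))).mp hli
    exact ((Matrix.isUnit_iff_isUnit_det _).mp hu).ne_zero
  have hc0 : c ≠ 0 := by
    have h32 : x₃ - x₂ = (x₃ - x₀) - (x₂ - x₀) := by ring_nf
    rw [hc, h32, det3_sub, det3_eq_det]
    exact hdet
  have key : ∀ t : ℝ, φ (x₂ + t • (x₃ - x₂)) ⬝ᵥ (x₃ - x₂) = 1 := by
    intro t
    rw [hφ]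
    have harg : (x₂ + t • (x₃ - x₂)) - x₀ = (x₂ - x₀) + t • (x₃ - x₂) := by ring_nf
    rw [harg, map_add, LinearMap.map_smul,
      smul_dotProduct, add_dotProduct, smul_dotProduct,
      dotProduct_comm ((crossProduct (x₁ - x₀)) (x₃ - x₂)) (x₃ - x₂),
      dot_cross_self,
      show (crossProduct (x₁ - x₀)) (x₂ - x₀) ⬝ᵥ (x₃ - x₂) = c from rfl]
    field_simp
    simp only [smul_zero, mul_zero, add_zero, smul_eq_mul, one_div, inv_mul_cancel₀ hc0]
  simp only [key]
  simp
end

section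
/- Let E ⊂ ℝ be a bounded interval of length h_E and let q ∈ P^k(E) be a polynomial of degree at most k on E. Suppose that for some G ∈ P^k(E) and real numbers q_{V₁}, q_{V₂} we have ∫_E q r' = −∫_E G r + (q_{V₂} r(b) − q_{V₁} r(a)) for all r ∈ P^{k+1}(E) with ∫_E r = 0, where E = [a,b]. Then ‖q‖²_{L²(E)} ≲ h_E² ‖G‖²_{L²(E)} + h_E(q_{V₁}² + q_{V₂}²), with hidden constant depending only on k. -/
open MeasureTheory Polynomial

noncomputable def antideriv (p : Polynomial ℝ) : Polynomial ℝ :=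
  p.sum fun n a => C (a / (n+1)) * X ^ (n+1)

lemma antideriv_add (p q : Polynomial ℝ) :
    antideriv (p + q) = antideriv p + antideriv q := by
  unfold antideriv
  apply Polynomial.sum_add_index <;> intros <;> simp [add_div, add_mul]

lemma antideriv_monomial (n : ℕ) (a : ℝ) :
    antideriv (C a * X ^ n) = C (a / (n+1)) * X ^ (n+1) := by
  unfold antideriv
  rw [C_mul_X_pow_eq_monomial, Polynomial.sum_monomial_index]
  simp

lemma derivative_antideriv (p : Polynomial ℝ) : derivative (antideriv p) = p := by
  unfold antideriv
  rw [Polynomial.sum_def, map_sum]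
  conv_rhs => rw [← Polynomial.sum_C_mul_X_pow_eq p, Polynomial.sum_def]
  refine Finset.sum_congr rfl fun n _ => ?_
  have h : ((n:ℝ)+1) ≠ 0 := by positivity
  rw [derivative_C_mul, derivative_X_pow]
  push_cast
  rw [← mul_assoc, ← C_mul, div_mul_cancel₀ _ h]

lemma natDegree_antideriv (p : Polynomial ℝ) :
    (antideriv p).natDegree ≤ p.natDegree + 1 := by
  unfold antideriv
  rw [Polynomial.sum_def]
  refine Polynomial.natDegree_sum_le_of_forall_le _ _ fun n hn => ?_
  refine le_trans (natDegree_C_mul_le _ _) ?_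
  rw [natDegree_X_pow]
  exact Nat.add_le_add_right (Polynomial.le_natDegree_of_mem_supp n hn) 1

lemma poly_ii (p : Polynomial ℝ) (a b : ℝ) :
    IntervalIntegrable (fun x => p.eval x) volume a b :=
  (Polynomial.continuous p).intervalIntegrable a b

lemma integral_derivative_eval (p : Polynomial ℝ) (a b : ℝ) :
    ∫ x in a..b, p.derivative.eval x = p.eval b - p.eval a := by
  exact intervalIntegral.integral_eq_sub_of_hasDerivAt (fun x _ => p.hasDerivAt x)
    (poly_ii _ a b)

lemma integral_eval (p : Polynomial ℝ) (a b : ℝ) :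
    ∫ x in a..b, p.eval x = (antideriv p).eval b - (antideriv p).eval a := by
  rw [← integral_derivative_eval, derivative_antideriv]

noncomputable def U (n : ℕ) (c : Fin n → ℝ) : Polynomial ℝ := ∑ i : Fin n, C (c i) * X ^ (i : ℕ)

lemma U_eval (n : ℕ) (c : Fin n → ℝ) (x : ℝ) :
    (U n c).eval x = ∑ i : Fin n, c i * x ^ (i : ℕ) := by
  simp [U, eval_finset_sum]

lemma U_coeff (n : ℕ) (c : Fin n → ℝ) (i : Fin n) : (U n c).coeff i = c i := by
  rw [U, Polynomial.finset_sum_coeff]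
  rw [Finset.sum_eq_single i]
  · simp
  · intro j _ hji
    simp only [coeff_C_mul, coeff_X_pow]
    rw [if_neg (fun h => hji (Fin.ext h.symm)), mul_zero]
  · simp

lemma U_ne_zero (n : ℕ) (c : Fin n → ℝ) (hc : c ≠ 0) : U n c ≠ 0 := by
  intro h
  apply hc
  funext i
  have := U_coeff n c i
  rw [h] at this
  simpa using this.symm

lemma U_smul (n : ℕ) (t : ℝ) (c : Fin n → ℝ) : U n (t • c) = C t * U n c := by
  rw [U, U, Finset.mul_sum]
  exact Finset.sum_congr rfl fun i _ => by simp [C_mul]; ring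

lemma U_natDegree (k : ℕ) (c : Fin (k+1) → ℝ) : (U (k+1) c).natDegree ≤ k := by
  refine Polynomial.natDegree_sum_le_of_forall_le _ _ fun i _ => ?_
  refine le_trans (natDegree_C_mul_le _ _) ?_
  rw [natDegree_X_pow]
  exact Nat.lt_succ_iff.mp i.isLt

lemma U_eq (k : ℕ) (p : Polynomial ℝ) (hp : p.natDegree ≤ k) :
    U (k+1) (fun i => p.coeff i) = p := by
  conv_rhs => rw [p.as_sum_range' (k+1) (Nat.lt_succ_of_le hp)]
  rw [U, Fin.sum_univ_eq_sum_range (fun i => C (p.coeff i) * X ^ i)]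
  exact Finset.sum_congr rfl fun i _ => by rw [C_mul_X_pow_eq_monomial]

noncomputable def Qf (n : ℕ) (c : Fin n → ℝ) : ℝ :=
  ∑ i : Fin n, ∑ j : Fin n, c i * c j / ((i : ℕ) + (j : ℕ) + 1)

lemma Qf_eq (n : ℕ) (c : Fin n → ℝ) :
    (∫ t in (0:ℝ)..1, (U n c).eval t ^ 2) = Qf n c := by
  have h1 : ∀ t : ℝ, (U n c).eval t ^ 2
      = ∑ i : Fin n, ∑ j : Fin n, (c i * c j) * t ^ ((i : ℕ) + (j : ℕ)) := by
    intro t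
    rw [U_eval, sq, Finset.sum_mul_sum]
    exact Finset.sum_congr rfl fun i _ => Finset.sum_congr rfl fun j _ => by ring
  simp_rw [h1]
  rw [intervalIntegral.integral_finset_sum]
  · refine Finset.sum_congr rfl fun i _ => ?_
    rw [intervalIntegral.integral_finset_sum]
    · refine Finset.sum_congr rfl fun j _ => ?_
      rw [intervalIntegral.integral_const_mul, integral_pow]
      push_cast
      rw [one_pow, zero_pow (by positivity), sub_zero, div_eq_mul_inv, div_eq_mul_inv, one_mul]
    · exact fun j _ => (Continuous.intervalIntegrable (by continuity) _ _)
  · exact fun i _ => (Continuous.intervalIntegrable (by continuity) _ _)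

lemma Qf_smul (n : ℕ) (t : ℝ) (c : Fin n → ℝ) : Qf n (t • c) = t ^ 2 * Qf n c := by
  simp only [Qf, Pi.smul_apply, smul_eq_mul, Finset.mul_sum]
  exact Finset.sum_congr rfl fun i _ => Finset.sum_congr rfl fun j _ => by ring

lemma Qf_nonneg (n : ℕ) (c : Fin n → ℝ) : 0 ≤ Qf n c := by
  rw [← Qf_eq]
  exact intervalIntegral.integral_nonneg zero_le_one fun x _ => sq_nonneg _

lemma integral_sq_pos (p : Polynomial ℝ) (hp : p ≠ 0) (a b : ℝ) (hab : a < b) :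
    0 < ∫ x in a..b, p.eval x ^ 2 := by
  have hcont : Continuous fun x : ℝ => p.eval x ^ 2 := (Polynomial.continuous p).pow 2
  have hnn : 0 ≤ ∫ x in a..b, p.eval x ^ 2 :=
    intervalIntegral.integral_nonneg hab.le fun x _ => sq_nonneg _
  rcases hnn.lt_or_eq with h | h
  · exact h
  exfalso
  have hio : ∫ x in Set.Ioc a b, p.eval x ^ 2 = 0 := by
    rw [← intervalIntegral.integral_of_le hab.le, ← h]
  have hae : (fun x => p.eval x ^ 2) =ᵐ[volume.restrict (Set.Ioc a b)] 0 := by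
    rw [← MeasureTheory.integral_eq_zero_iff_of_nonneg (fun x => sq_nonneg _)
      ((hcont.integrableOn_Ioc))]
    exact hio
  -- the set where p ≠ 0 inside Ioo a b must be empty
  have hS : ∀ x ∈ Set.Ioo a b, p.eval x = 0 := by
    by_contra hcon
    push_neg at hcon
    obtain ⟨x₀, hx₀, hpx₀⟩ := hcon
    set S := {x : ℝ | p.eval x ^ 2 ≠ 0} ∩ Set.Ioo a b with hSdef
    have hSopen : IsOpen S :=
      ((isOpen_ne.preimage hcont)).inter isOpen_Ioo
    have hSne : S.Nonempty := ⟨x₀, by simp [hSdef, pow_eq_zero_iff, hpx₀], hx₀⟩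
    have hSpos : 0 < volume S := hSopen.measure_pos volume hSne
    have hnull : volume ({x : ℝ | p.eval x ^ 2 ≠ 0} ∩ Set.Ioc a b) = 0 := by
      have := MeasureTheory.ae_iff.mp hae
      rwa [MeasureTheory.Measure.restrict_apply₀] at this
      · exact (isOpen_ne.preimage hcont).measurableSet.nullMeasurableSet
    have : volume S = 0 :=
      MeasureTheory.measure_mono_null
        (Set.inter_subset_inter_right _ Set.Ioo_subset_Ioc_self) hnull
    exact hSpos.ne' this
  apply hp
  refine Polynomial.eq_zero_of_infinite_isRoot p ?_
  exact Set.Infinite.mono (fun x hx => hS x hx) (Set.Ioo_infinite hab)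

lemma Qf_pos (n : ℕ) (c : Fin n → ℝ) (hc : c ≠ 0) : 0 < Qf n c := by
  rw [← Qf_eq]
  exact integral_sq_pos _ (U_ne_zero n c hc) 0 1 zero_lt_one

lemma Qf_continuous (n : ℕ) : Continuous (Qf n) := by
  unfold Qf
  fun_prop

lemma Qf_lower (n : ℕ) [inst : Nontrivial (Fin n → ℝ)] :
    ∃ m : ℝ, 0 < m ∧ ∀ c : Fin n → ℝ, m * ‖c‖ ^ 2 ≤ Qf n c := by
  have hcomp : IsCompact (Metric.sphere (0 : Fin n → ℝ) 1) := isCompact_sphere _ _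
  have hne : (Metric.sphere (0 : Fin n → ℝ) 1).Nonempty :=
    NormedSpace.sphere_nonempty.mpr zero_le_one
  obtain ⟨c₀, hc₀, hmin'⟩ := hcomp.exists_isMinOn hne (Qf_continuous n).continuousOn
  have hmin : ∀ c ∈ Metric.sphere (0 : Fin n → ℝ) 1, Qf n c₀ ≤ Qf n c := fun c hc => hmin' hc
  have hc₀norm : ‖c₀‖ = 1 := by simpa using hc₀
  have hc₀ne : c₀ ≠ 0 := fun h => by simp [h] at hc₀norm
  refine ⟨Qf n c₀, Qf_pos n c₀ hc₀ne, fun c => ?_⟩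
  by_cases hc : c = 0
  · simp [hc, Qf_nonneg n (0 : Fin n → ℝ)]
  · have hn0 : ‖c‖ ≠ 0 := norm_ne_zero_iff.mpr hc
    set c' : Fin n → ℝ := ‖c‖⁻¹ • c with hc'
    have hc'mem : c' ∈ Metric.sphere (0 : Fin n → ℝ) 1 := by
      simp [hc', norm_smul, inv_mul_cancel₀ hn0]
    have : Qf n c = ‖c‖ ^ 2 * Qf n c' := by
      rw [hc', Qf_smul, ← mul_assoc]
      rw [← mul_pow, mul_inv_cancel₀ hn0]
      simp
    rw [this, mul_comm (Qf n c₀) _]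
    exact mul_le_mul_of_nonneg_left (hmin c' hc'mem) (by positivity)

noncomputable def zmp (p : Polynomial ℝ) : Polynomial ℝ :=
  antideriv p - C (∫ t in (0:ℝ)..1, (antideriv p).eval t)

lemma derivative_zmp (p : Polynomial ℝ) : derivative (zmp p) = p := by
  rw [zmp, derivative_sub, derivative_C, sub_zero, derivative_antideriv]

lemma natDegree_zmp (p : Polynomial ℝ) : (zmp p).natDegree ≤ p.natDegree + 1 := by
  refine le_trans (natDegree_sub_le _ _) ?_
  simp [natDegree_antideriv p]

lemma integral_zmp (p : Polynomial ℝ) : (∫ t in (0:ℝ)..1, (zmp p).eval t) = 0 := by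
  simp only [zmp, eval_sub, eval_C]
  rw [intervalIntegral.integral_sub (poly_ii _ 0 1)
    (intervalIntegrable_const)]
  simp

lemma antideriv_zero : antideriv 0 = 0 := by
  simp [antideriv]

lemma antideriv_sum {α : Type*} (s : Finset α) (f : α → Polynomial ℝ) :
    antideriv (∑ i ∈ s, f i) = ∑ i ∈ s, antideriv (f i) := by
  classical
  induction s using Finset.induction_on with
  | empty => simp [antideriv_zero]
  | insert _ _ h ih => rw [Finset.sum_insert h, Finset.sum_insert h, antideriv_add, ih]

lemma key (k : ℕ) : ∃ K : ℝ, 0 < K ∧ ∀ u : Polynomial ℝ, u.natDegree ≤ k →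
    ((∫ t in (0:ℝ)..1, (zmp u).eval t ^ 2) ≤ K * ∫ t in (0:ℝ)..1, u.eval t ^ 2) ∧
    (zmp u).eval 0 ^ 2 ≤ (K * ∫ t in (0:ℝ)..1, u.eval t ^ 2) ∧
    (zmp u).eval 1 ^ 2 ≤ (K * ∫ t in (0:ℝ)..1, u.eval t ^ 2) := by
  obtain ⟨m, hm, hml⟩ := Qf_lower (k+1)
  set B : ℝ := 2 * (k+1) with hB
  have hBpos : 0 < B := by positivity
  refine ⟨B ^ 2 / m, by positivity, fun u hu => ?_⟩
  set c : Fin (k+1) → ℝ := fun i => u.coeff i with hc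
  have hUc : U (k+1) c = u := U_eq k u hu
  have hQ : (∫ t in (0:ℝ)..1, u.eval t ^ 2) = Qf (k+1) c := by
    rw [← hUc, Qf_eq]
  -- pointwise bound on the antiderivative
  have hb1 : ∀ t : ℝ, t ∈ Set.Icc (0:ℝ) 1 → |(antideriv u).eval t| ≤ (k+1) * ‖c‖ := by
    intro t ht
    have : antideriv u = ∑ i : Fin (k+1), C (c i / ((i:ℕ)+1)) * X ^ ((i:ℕ)+1) := by
      rw [← hUc, U, antideriv_sum]
      exact Finset.sum_congr rfl fun i _ => antideriv_monomial _ _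
    rw [this, eval_finset_sum]
    refine le_trans (Finset.abs_sum_le_sum_abs _ _) ?_
    have : ∀ i : Fin (k+1), |eval t (C (c i / ((i:ℕ)+1)) * X ^ ((i:ℕ)+1))| ≤ ‖c‖ := by
      intro i
      rw [eval_mul, eval_C, eval_pow, eval_X, abs_mul, abs_pow]
      have h1 : |c i / ((i:ℕ)+1)| ≤ ‖c‖ := by
        rw [abs_div]
        refine le_trans (div_le_self (abs_nonneg _) (by have h0 : (0:ℝ) ≤ ((i:ℕ):ℝ) := Nat.cast_nonneg _; rw [abs_of_nonneg (by linarith)]; linarith)) ?_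
        exact norm_le_pi_norm c i
      have h2 : |t| ^ ((i:ℕ)+1) ≤ 1 := by
        apply pow_le_one₀ (abs_nonneg _)
        rw [abs_le]; constructor <;> linarith [ht.1, ht.2]
      calc |c i / ((i:ℕ)+1)| * |t| ^ ((i:ℕ)+1) ≤ |c i / ((i:ℕ)+1)| * 1 :=
            mul_le_mul_of_nonneg_left h2 (abs_nonneg _)
        _ ≤ ‖c‖ := by rw [mul_one]; exact h1
    refine le_trans (Finset.sum_le_sum fun i _ => this i) ?_
    simp [Finset.sum_const]
  have hInt : |∫ t in (0:ℝ)..1, (antideriv u).eval t| ≤ (k+1) * ‖c‖ := by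
    have := intervalIntegral.norm_integral_le_of_norm_le_const
      (C := (k+1) * ‖c‖) (f := fun t => (antideriv u).eval t) (a := (0:ℝ)) (b := 1) ?_
    · simpa using this
    · intro x hx
      rw [Set.uIoc_of_le zero_le_one] at hx
      exact hb1 x ⟨hx.1.le, hx.2⟩
  have hzb : ∀ t : ℝ, t ∈ Set.Icc (0:ℝ) 1 → |(zmp u).eval t| ≤ B * ‖c‖ := by
    intro t ht
    rw [zmp, eval_sub, eval_C]
    refine le_trans (abs_sub _ _) ?_
    have := hb1 t ht
    rw [hB]; nlinarith [hInt, this]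
  have hnc : 0 ≤ ‖c‖ := norm_nonneg c
  have hsq : ∀ t : ℝ, t ∈ Set.Icc (0:ℝ) 1 → (zmp u).eval t ^ 2 ≤ (B * ‖c‖) ^ 2 := by
    intro t ht
    rw [← sq_abs]
    exact pow_le_pow_left₀ (abs_nonneg _) (hzb t ht) 2
  have hKQ : (B * ‖c‖) ^ 2 ≤ B ^ 2 / m * ∫ t in (0:ℝ)..1, u.eval t ^ 2 := by
    rw [hQ]
    have := hml c
    calc (B * ‖c‖) ^ 2 = B ^ 2 / m * (m * ‖c‖ ^ 2) := by field_simp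
      _ ≤ B ^ 2 / m * Qf (k+1) c := by
          exact mul_le_mul_of_nonneg_left this (by positivity)
  refine ⟨?_, le_trans (hsq 0 (by norm_num)) hKQ, le_trans (hsq 1 (by norm_num)) hKQ⟩
  calc (∫ t in (0:ℝ)..1, (zmp u).eval t ^ 2) ≤ ∫ t in (0:ℝ)..1, (B * ‖c‖) ^ 2 := by
        refine intervalIntegral.integral_mono_on zero_le_one ?_ intervalIntegrable_const
          (fun t ht => hsq t ht)
        exact Continuous.intervalIntegrable ((Polynomial.continuous _).pow 2) _ _
    _ = (B * ‖c‖) ^ 2 := by simp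
    _ ≤ _ := hKQ

lemma cauchy_schwarz_poly (f g : Polynomial ℝ) (a b : ℝ) (hab : a ≤ b) :
    (∫ x in a..b, f.eval x * g.eval x) ^ 2 ≤
      (∫ x in a..b, f.eval x ^ 2) * ∫ x in a..b, g.eval x ^ 2 := by
  set A := ∫ x in a..b, f.eval x ^ 2 with hA
  set Bv := ∫ x in a..b, f.eval x * g.eval x with hBv
  set Cv := ∫ x in a..b, g.eval x ^ 2 with hCv
  have key : ∀ t : ℝ, 0 ≤ A * (t * t) + (2 * Bv) * t + Cv := by
    intro t
    have h1 : (∫ x in a..b, (t * f.eval x + g.eval x) ^ 2) = A * (t * t) + (2 * Bv) * t + Cv := by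
      have hexp : ∀ x : ℝ, (t * f.eval x + g.eval x) ^ 2
          = t ^ 2 * f.eval x ^ 2 + (2 * t) * (f.eval x * g.eval x) + g.eval x ^ 2 := by
        intro x; ring
      simp_rw [hexp]
      rw [intervalIntegral.integral_add, intervalIntegral.integral_add,
        intervalIntegral.integral_const_mul, intervalIntegral.integral_const_mul]
      · ring
      · exact Continuous.intervalIntegrable (by fun_prop) _ _
      · exact Continuous.intervalIntegrable (by fun_prop) _ _
      · exact Continuous.intervalIntegrable (by fun_prop) _ _
      · exact Continuous.intervalIntegrable (by fun_prop) _ _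
    rw [← h1]
    exact intervalIntegral.integral_nonneg hab fun x _ => sq_nonneg _
  have hd := discrim_le_zero (a := A) (b := 2*Bv) (c := Cv) key
  rw [discrim] at hd
  nlinarith [hd]

lemma three_sq (x y z : ℝ) :
    (x + y + z) ^ 2 ≤ 3 * (x ^ 2 + y ^ 2 + z ^ 2) := by
  nlinarith [sq_nonneg (x - y), sq_nonneg (y - z), sq_nonneg (x - z)]

lemma comp_eval (p : Polynomial ℝ) (a h t : ℝ) :
    (p.comp (C a + C h * X)).eval t = p.eval (a + h * t) := by
  simp [eval_comp]

lemma comp_integral (p : Polynomial ℝ) (a b : ℝ) (hab : a < b) :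
    (∫ t in (0:ℝ)..1, (p.comp (C a + C (b-a) * X)).eval t)
      = (b-a)⁻¹ * ∫ x in a..b, p.eval x := by
  have hh : b - a ≠ 0 := sub_ne_zero.mpr hab.ne'
  have h1 : ∀ t : ℝ, (p.comp (C a + C (b-a) * X)).eval t = p.eval ((b-a) * t + a) := by
    intro t; rw [comp_eval]; congr 1; ring
  simp_rw [h1]
  rw [intervalIntegral.integral_comp_mul_add (f := fun x => p.eval x) hh a]
  have e1 : (b - a) * 0 + a = a := by ring
  have e2 : (b - a) * 1 + a = b := by ring
  rw [e1, e2, smul_eq_mul]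


theorem stmt19 (k : ℕ) :
    ∃ C : ℝ, 0 < C ∧ ∀ (a b : ℝ), a < b → ∀ (q G : Polynomial ℝ),
      q.natDegree ≤ k → G.natDegree ≤ k → ∀ qV₁ qV₂ : ℝ,
      (∀ r : Polynomial ℝ, r.natDegree ≤ k + 1 → (∫ x in a..b, r.eval x) = 0 →
        ∫ x in a..b, q.eval x * r.derivative.eval x =
          -(∫ x in a..b, G.eval x * r.eval x) + (qV₂ * r.eval b - qV₁ * r.eval a)) →
      (∫ x in a..b, (q.eval x) ^ 2) ≤
        C * ((b - a) ^ 2 * (∫ x in a..b, (G.eval x) ^ 2)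
          + (b - a) * (qV₁ ^ 2 + qV₂ ^ 2)) := by
  obtain ⟨K, hK, hkey⟩ := key k
  refine ⟨3 * K, by positivity, ?_⟩
  intro a b hab q G hq hG qV₁ qV₂ H
  have hhpos : 0 < b - a := sub_pos.mpr hab
  have hhne : b - a ≠ 0 := hhpos.ne'
  set h : ℝ := b - a with hh
  -- zero-mean primitive of q on [a,b]
  set r : Polynomial ℝ := antideriv q - C ((∫ x in a..b, (antideriv q).eval x) / h) with hr
  have hrd : derivative r = q := by
    rw [hr, derivative_sub, derivative_C, sub_zero, derivative_antideriv]
  have hrdeg : r.natDegree ≤ k + 1 := by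
    refine le_trans (natDegree_sub_le _ _) ?_
    simp only [natDegree_C, max_le_iff]
    exact ⟨le_trans (natDegree_antideriv q) (by omega), by omega⟩
  have hrint : (∫ x in a..b, r.eval x) = 0 := by
    simp only [hr, eval_sub, eval_C]
    rw [intervalIntegral.integral_sub (poly_ii _ a b) intervalIntegrable_const,
      intervalIntegral.integral_const, smul_eq_mul, ← hh]
    field_simp
    ring
  have Hq := H r hrdeg hrint
  rw [hrd] at Hq
  set S : ℝ := ∫ x in a..b, q.eval x ^ 2 with hS
  have hSnn : 0 ≤ S := intervalIntegral.integral_nonneg hab.le fun x _ => sq_nonneg _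
  have hSval : S = -(∫ x in a..b, G.eval x * r.eval x) + (qV₂ * r.eval b - qV₁ * r.eval a) := by
    rw [← Hq, hS]
    refine intervalIntegral.integral_congr fun x _ => ?_
    simp [pow_two]
  -- scaled polynomials
  set L : Polynomial ℝ := C a + C h * X with hL
  have hLdeg : L.natDegree ≤ 1 := by
    refine le_trans (natDegree_add_le _ _) ?_
    simp only [natDegree_C, max_le_iff]
    exact ⟨by omega, le_trans (natDegree_mul_le) (by simp)⟩
  set φq : Polynomial ℝ := q.comp L with hφq
  set φr : Polynomial ℝ := r.comp L with hφr
  set w : Polynomial ℝ := C h * φq with hw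
  have hφqdeg : φq.natDegree ≤ k := by
    refine le_trans (natDegree_comp_le) ?_
    calc q.natDegree * L.natDegree ≤ k * 1 := Nat.mul_le_mul hq hLdeg
      _ = k := by omega
  have hwdeg : w.natDegree ≤ k :=
    le_trans natDegree_mul_le (by simpa using hφqdeg)
  have hφrd : derivative φr = w := by
    rw [hφr, derivative_comp, hL]
    simp only [derivative_add, derivative_C, derivative_mul, derivative_X, zero_add,
      mul_one, mul_zero, add_zero, zero_mul]
    rw [hrd, hw, hφq, hL]
  have hφrint : (∫ t in (0:ℝ)..1, φr.eval t) = 0 := by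
    rw [hφr, hL, hh, comp_integral r a b hab, ← hh, hrint, mul_zero]
  -- φr is the zero-mean primitive of w on [0,1]
  have hφr_eq : φr = zmp w := by
    have hdd : derivative (zmp w - φr) = 0 := by
      rw [derivative_sub, derivative_zmp, hφrd, sub_self]
    have hnd : (zmp w - φr).natDegree = 0 :=
      natDegree_eq_zero_of_derivative_eq_zero hdd
    have hCc : zmp w - φr = C ((zmp w - φr).coeff 0) := eq_C_of_natDegree_eq_zero hnd
    have hint0 : (∫ t in (0:ℝ)..1, (zmp w - φr).eval t) = 0 := by
      simp only [eval_sub]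
      rw [intervalIntegral.integral_sub (poly_ii _ 0 1) (poly_ii _ 0 1),
        integral_zmp, hφrint, sub_zero]
    rw [hCc] at hint0
    simp only [eval_C, intervalIntegral.integral_const, smul_eq_mul, sub_zero,
      one_mul] at hint0
    have : zmp w - φr = 0 := by rw [hCc, hint0, map_zero]
    exact (sub_eq_zero.mp this).symm
  obtain ⟨k1, k2, k3⟩ := hkey w hwdeg
  rw [← hφr_eq] at k1 k2 k3
  -- compute ∫₀¹ w²
  have hwsq : (∫ t in (0:ℝ)..1, w.eval t ^ 2) = h * S := by
    have h1 : ∀ t : ℝ, w.eval t ^ 2 = h ^ 2 * ((q*q).comp L).eval t := by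
      intro t
      rw [hw, mul_comp, ← hφq]
      simp only [eval_mul, eval_C]
      ring
    simp_rw [h1]
    rw [intervalIntegral.integral_const_mul, hL, hh, comp_integral (q*q) a b hab, ← hh]
    have h2 : (∫ x in a..b, (q*q).eval x) = S := by
      rw [hS]
      refine intervalIntegral.integral_congr fun x _ => ?_
      simp [pow_two]
    rw [h2]
    field_simp
  rw [hwsq] at k1 k2 k3
  -- transfer back to [a,b]
  have hrsq : (∫ x in a..b, r.eval x ^ 2) = h * ∫ t in (0:ℝ)..1, φr.eval t ^ 2 := by
    have h1 : ∀ t : ℝ, φr.eval t ^ 2 = ((r*r).comp L).eval t := by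
      intro t
      rw [mul_comp, eval_mul, hφr, pow_two]
    simp_rw [h1]
    rw [hL, hh, comp_integral (r*r) a b hab, ← hh]
    have h2 : (∫ x in a..b, (r*r).eval x) = ∫ x in a..b, r.eval x ^ 2 := by
      refine intervalIntegral.integral_congr fun x _ => ?_
      simp [pow_two]
    rw [h2]
    field_simp
  have hreva : r.eval a = φr.eval 0 := by
    rw [hφr, hL, comp_eval]; norm_num
  have hrevb : r.eval b = φr.eval 1 := by
    rw [hφr, hL, comp_eval, hh]; congr 1; ring
  have hNR : (∫ x in a..b, r.eval x ^ 2) ≤ K * (h * S) * h := by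
    rw [hrsq]
    calc h * ∫ t in (0:ℝ)..1, φr.eval t ^ 2 ≤ h * (K * (h * S)) :=
          mul_le_mul_of_nonneg_left k1 hhpos.le
      _ = K * (h * S) * h := by ring
  have hRa : r.eval a ^ 2 ≤ K * (h * S) := by rw [hreva]; exact k2
  have hRb : r.eval b ^ 2 ≤ K * (h * S) := by rw [hrevb]; exact k3
  -- Cauchy–Schwarz
  set IG : ℝ := ∫ x in a..b, G.eval x * r.eval x with hIG
  have hNGnn : 0 ≤ ∫ x in a..b, G.eval x ^ 2 :=
    intervalIntegral.integral_nonneg hab.le fun x _ => sq_nonneg _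
  have hNRnn : 0 ≤ ∫ x in a..b, r.eval x ^ 2 :=
    intervalIntegral.integral_nonneg hab.le fun x _ => sq_nonneg _
  have hcs : IG ^ 2 ≤ (∫ x in a..b, G.eval x ^ 2) * ∫ x in a..b, r.eval x ^ 2 :=
    cauchy_schwarz_poly G r a b hab.le
  set NG : ℝ := ∫ x in a..b, G.eval x ^ 2 with hNG
  -- assemble
  set T : ℝ := |IG| + |qV₂| * |r.eval b| + |qV₁| * |r.eval a| with hT
  have hST : S ≤ T := by
    rw [hT, hSval]
    have h1 := neg_le_abs IG
    have h2 := le_abs_self (qV₂ * r.eval b)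
    have h3 := neg_le_abs (qV₁ * r.eval a)
    rw [abs_mul] at h2 h3
    linarith
  have hTnn : 0 ≤ T := by positivity
  have hT2 : T ^ 2 ≤ 3 * (IG ^ 2 + qV₂ ^ 2 * r.eval b ^ 2 + qV₁ ^ 2 * r.eval a ^ 2) := by
    rw [hT]
    have h0 := three_sq |IG| (|qV₂| * |r.eval b|) (|qV₁| * |r.eval a|)
    simpa [mul_pow, sq_abs] using h0
  have hchain : T ^ 2 ≤ 3 * K * S * (h ^ 2 * NG + h * (qV₁ ^ 2 + qV₂ ^ 2)) := by
    have c1 : IG ^ 2 ≤ NG * (K * (h * S) * h) :=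
      le_trans hcs (mul_le_mul_of_nonneg_left hNR hNGnn)
    have c2 : qV₂ ^ 2 * r.eval b ^ 2 ≤ qV₂ ^ 2 * (K * (h * S)) :=
      mul_le_mul_of_nonneg_left hRb (sq_nonneg _)
    have c3 : qV₁ ^ 2 * r.eval a ^ 2 ≤ qV₁ ^ 2 * (K * (h * S)) :=
      mul_le_mul_of_nonneg_left hRa (sq_nonneg _)
    calc T ^ 2 ≤ 3 * (NG * (K * (h * S) * h) + qV₂ ^ 2 * (K * (h * S)) + qV₁ ^ 2 * (K * (h * S))) := by
          linarith [hT2, c1, c2, c3]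
      _ = 3 * K * S * (h ^ 2 * NG + h * (qV₁ ^ 2 + qV₂ ^ 2)) := by ring
  have hS2 : S ^ 2 ≤ T ^ 2 := pow_le_pow_left₀ hSnn hST 2
  have hRnn : 0 ≤ h ^ 2 * NG + h * (qV₁ ^ 2 + qV₂ ^ 2) := by positivity
  rcases hSnn.lt_or_eq with hpos | hzero
  · have hmul : S * S ≤ (3 * K * (h ^ 2 * NG + h * (qV₁ ^ 2 + qV₂ ^ 2))) * S := by
      calc S * S = S ^ 2 := by ring
        _ ≤ T ^ 2 := hS2
        _ ≤ 3 * K * S * (h ^ 2 * NG + h * (qV₁ ^ 2 + qV₂ ^ 2)) := hchain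
        _ = (3 * K * (h ^ 2 * NG + h * (qV₁ ^ 2 + qV₂ ^ 2))) * S := by ring
    exact le_of_mul_le_mul_right hmul hpos
  · rw [← hzero]
    exact mul_nonneg (by positivity) hRnn
end
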